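/- arXiv:1407.1598 — 3 statements merged into one kernel-verified Lean document; each statement's English description precedes it below -/
import Mathlib

section
/- Let J : ℝ^N → ℝ be a finite-valued convex function, Φ : ℝ^N → ℝ^P linear, and x₀ ∈ ℝ^N with Im(Φ^*) ∩ ∂J(x₀) ≠ ∅ and ker(Φ) ∩ T_{x₀} = {0}. Then: (i) all elements of ∂J(x₀) have the same orthogonal projection e_{x₀} onto T_{x₀}, and aff(∂J(x₀)) = e_{x₀} + T_{x₀}^⊥; (ii) the set {p ∈ ℝ^P : Φ^*p ∈ aff(∂J(x₀))} is a nonempty affine subspace, and its unique minimal-Euclidean-norm element p_F is the unique vector p belonging to the range of Φ∘proj_{T_{x₀}} that satisfies proj_{T_{x₀}}(Φ^*p) = e_{x₀}. -/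
open Matrix

/-- Euclidean dot product on `ℝ^n`. -/
noncomputable def dotp {n : ℕ} (u v : Fin n → ℝ) : ℝ := ∑ i, u i * v i

/-- Euclidean (ℓ²) norm on `ℝ^n`. -/
noncomputable def nrm2 {n : ℕ} (u : Fin n → ℝ) : ℝ := Real.sqrt (∑ i, (u i) ^ 2)

/-- ℓ¹ norm on `ℝ^n`. -/
noncomputable def l1norm {n : ℕ} (u : Fin n → ℝ) : ℝ := ∑ i, |u i|

/-- ℓ^∞ norm of a finitely indexed real vector. -/
noncomputable def linf {ι : Type*} [Fintype ι] (u : ι → ℝ) : ℝ := ⨆ i, |u i|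

/-- The sign function: 1 for positive, -1 for negative, 0 at 0. -/
noncomputable def sgn (t : ℝ) : ℝ := if 0 < t then 1 else if t < 0 then -1 else 0

/-- Subdifferential of a finite-valued function `J : ℝ^n → ℝ` at `x`:
`∂J(x) = {η : J(x+δ) ≥ J(x) + ⟨η,δ⟩ for all δ}`. -/
def subdiff {n : ℕ} (J : (Fin n → ℝ) → ℝ) (x : Fin n → ℝ) : Set (Fin n → ℝ) :=
  {η | ∀ δ, J x + dotp η δ ≤ J (x + δ)}

/-- The model tangent subspace `T_x = Lin(∂J(x))^⊥`, where `Lin(E)` is the linear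
space parallel to the affine hull of `E`. -/
def modelT {n : ℕ} (J : (Fin n → ℝ) → ℝ) (x : Fin n → ℝ) : Set (Fin n → ℝ) :=
  {u | ∀ v ∈ (affineSpan ℝ (subdiff J x)).direction, dotp u v = 0}

/-!
Let `D` be the direction of `aff ∂J(x₀)` and `T = Dᗮ`. For `η₀ ∈ ∂J(x₀)`, a point `z` lies in
`aff ∂J(x₀) = η₀ + D` iff `P_T z = P_T η₀ =: e`, which gives (i). The set
`{p | Φᵀ p ∈ aff ∂J(x₀)}` is the affine subspace `p₀ + (Φᵀ)⁻¹ D`, and the orthogonal complement of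
its direction is `((Φᵀ)⁻¹ D)ᗮ = Φ T`, the range of `Φ ∘ P_T`. The minimal-norm point of an affine
subspace is its unique point orthogonal to the direction (Pythagoras), which gives (ii).
-/

open WithLp
open scoped InnerProductSpace

theorem Submodule.orthogonal_comap_eq_map_adjoint {𝕜 E F : Type*} [RCLike 𝕜]
    [NormedAddCommGroup E] [InnerProductSpace 𝕜 E] [FiniteDimensional 𝕜 E]
    [NormedAddCommGroup F] [InnerProductSpace 𝕜 F] [FiniteDimensional 𝕜 F]
    (f : F →ₗ[𝕜] E) (K : Submodule 𝕜 E) :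
    (K.comap f)ᗮ = Kᗮ.map f.adjoint := by
  rw [← (Kᗮ.map f.adjoint).orthogonal_orthogonal]
  congr 1
  ext p
  conv_lhs => rw [mem_comap, ← K.orthogonal_orthogonal]
  simp only [mem_orthogonal, mem_map, forall_exists_index, and_imp, forall_apply_eq_imp_iff₂,
    LinearMap.adjoint_inner_left]

theorem AffineSubspace.direction_comap {k V₁ V₂ P₁ P₂ : Type*} [Ring k]
    [AddCommGroup V₁] [Module k V₁] [AddTorsor V₁ P₁]
    [AddCommGroup V₂] [Module k V₂] [AddTorsor V₂ P₂]
    {A : AffineSubspace k P₂} {f : P₁ →ᵃ[k] P₂} {p : P₁} (hp : f p ∈ A) :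
    (A.comap f).direction = A.direction.comap f.linear := by
  ext v
  rw [← vadd_mem_iff_mem_direction v (show p ∈ A.comap f from hp), mem_comap, f.map_vadd,
    Submodule.mem_comap, vadd_mem_iff_mem_direction _ hp]

namespace AffineSubspace

variable {𝕜 E : Type*} [RCLike 𝕜] [NormedAddCommGroup E] [InnerProductSpace 𝕜 E]
  (A : AffineSubspace 𝕜 E)

theorem norm_lt_of_mem_orthogonal {p q : E} (hp : p ∈ A) (hpT : p ∈ A.directionᗮ) (hq : q ∈ A)
    (hne : q ≠ p) : ‖p‖ < ‖q‖ := by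
  have hpyth : ‖q‖ * ‖q‖ = ‖p‖ * ‖p‖ + ‖q - p‖ * ‖q - p‖ := by
    rw [← norm_add_sq_eq_norm_sq_add_norm_sq_of_inner_eq_zero (𝕜 := 𝕜) p (q - p),
      add_sub_cancel]
    exact Submodule.inner_left_of_mem_orthogonal (A.vsub_mem_direction hq hp) hpT
  have hpos : 0 < ‖q - p‖ := norm_pos_iff.2 (sub_ne_zero.2 hne)
  nlinarith [norm_nonneg p, norm_nonneg q]

variable [FiniteDimensional 𝕜 E]

theorem mem_iff_starProjection_eq {η z : E} (hη : η ∈ A) :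
    z ∈ A ↔ A.directionᗮ.starProjection z = A.directionᗮ.starProjection η := by
  rw [← vsub_right_mem_direction_iff_mem hη, ← sub_eq_zero, ← map_sub, vsub_eq_sub,
    Submodule.starProjection_apply_eq_zero_iff, Submodule.orthogonal_orthogonal]

theorem starProjection_mem {η : E} (hη : η ∈ A) : A.directionᗮ.starProjection η ∈ A :=
  (A.mem_iff_starProjection_eq hη).2 <|
    Submodule.starProjection_eq_self_iff.2 (Submodule.starProjection_apply_mem _ _)

theorem mem_iff_exists_eq_starProjection_add {η z : E} (hη : η ∈ A) :
    z ∈ A ↔ ∃ v ∈ A.direction, z = A.directionᗮ.starProjection η + v := by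
  conv_lhs => rw [← mk'_eq (A.starProjection_mem hη), mem_mk', vsub_eq_sub]
  exact ⟨fun h => ⟨_, h, (add_sub_cancel _ _).symm⟩, by rintro ⟨v, hv, rfl⟩; simpa using hv⟩

theorem eq_starProjection_of_mem_orthogonal {η p : E} (hη : η ∈ A) (hp : p ∈ A)
    (hpT : p ∈ A.directionᗮ) : p = A.directionᗮ.starProjection η :=
  (Submodule.starProjection_eq_self_iff.2 hpT).symm.trans ((A.mem_iff_starProjection_eq hη).1 hp)

theorem exists_minNorm_comap {F : Type*} [NormedAddCommGroup F] [InnerProductSpace 𝕜 F]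
    [FiniteDimensional 𝕜 F] (f : F →ₗ[𝕜] E) {p₀ : F} (hp₀ : f p₀ ∈ A) :
    ∃ pF, f pF ∈ A ∧ pF ∈ A.directionᗮ.map f.adjoint ∧
      (∀ q, f q ∈ A → q ≠ pF → ‖pF‖ < ‖q‖) ∧
      ∀ p ∈ A.directionᗮ.map f.adjoint, f p ∈ A → p = pF := by
  set B := A.comap f.toAffineMap
  have hp₀B : p₀ ∈ B := hp₀
  have hB : B.directionᗮ = A.directionᗮ.map f.adjoint := by
    rw [direction_comap hp₀, LinearMap.toAffineMap_linear,
      Submodule.orthogonal_comap_eq_map_adjoint]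
  rw [← hB]
  exact ⟨_, B.starProjection_mem hp₀B, Submodule.starProjection_apply_mem _ _,
    fun q hq hne => B.norm_lt_of_mem_orthogonal (B.starProjection_mem hp₀B)
      (Submodule.starProjection_apply_mem _ _) hq hne,
    fun p hpT hp => B.eq_starProjection_of_mem_orthogonal hp₀B hp hpT⟩

end AffineSubspace

section Euclidean

variable {n : ℕ}

theorem dotp_eq_inner (u v : Fin n → ℝ) : dotp u v = ⟪toLp 2 u, toLp 2 v⟫_ℝ := by
  simp [dotp, PiLp.inner_apply, mul_comm]

theorem nrm2_eq_norm (u : Fin n → ℝ) : nrm2 u = ‖toLp 2 u‖ := by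
  simp [nrm2, EuclideanSpace.norm_eq]

theorem forall_dotp_eq_zero_iff (K : Submodule ℝ (EuclideanSpace ℝ (Fin n))) (v : Fin n → ℝ) :
    (∀ u, toLp 2 u ∈ K → dotp v u = 0) ↔ toLp 2 v ∈ Kᗮ := by
  simp only [Submodule.mem_orthogonal', dotp_eq_inner]
  exact ⟨fun h w hw => h w.ofLp hw, fun h u hu => h _ hu⟩

theorem Matrix.adjoint_toEuclideanLin_transpose {m : ℕ} (Φ : Matrix (Fin m) (Fin n) ℝ) :
    (toEuclideanLin Φᵀ).adjoint = toEuclideanLin Φ := by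
  rw [← toEuclideanLin_conjTranspose_eq_adjoint, conjTranspose_eq_transpose_of_trivial,
    transpose_transpose]

theorem exists_eq_mulVec_starProjection_iff {m : ℕ} (Φ : Matrix (Fin m) (Fin n) ℝ)
    (K : Submodule ℝ (EuclideanSpace ℝ (Fin n))) (p : Fin m → ℝ) :
    (∃ x, p = Φ *ᵥ ofLp (K.starProjection (toLp 2 x))) ↔ toLp 2 p ∈ K.map (toEuclideanLin Φ) := by
  constructor
  · rintro ⟨x, rfl⟩
    exact ⟨_, K.starProjection_apply_mem (toLp 2 x), rfl⟩
  · rintro ⟨t, ht, hpt⟩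
    refine ⟨ofLp t, ?_⟩
    rw [toLp_ofLp, Submodule.starProjection_eq_self_iff.2 ht]
    exact congrArg ofLp hpt.symm

end Euclidean

theorem stmt8_general {N P : ℕ} (J : (Fin N → ℝ) → ℝ)
    (Φ : Matrix (Fin P) (Fin N) ℝ) (x₀ : Fin N → ℝ)
    (hD : ({η : Fin N → ℝ | ∃ p : Fin P → ℝ, η = Φᵀ.mulVec p} ∩ subdiff J x₀).Nonempty) :
    ∃ π : (Fin N → ℝ) → (Fin N → ℝ),
      (∀ v, π v ∈ modelT J x₀ ∧ ∀ u ∈ modelT J x₀, dotp (v - π v) u = 0) ∧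
      ∃ e : Fin N → ℝ,
        (∀ η ∈ subdiff J x₀, π η = e) ∧
        ((affineSpan ℝ (subdiff J x₀) : Set (Fin N → ℝ)) =
          {z | ∃ v, (∀ u ∈ modelT J x₀, dotp v u = 0) ∧ z = e + v}) ∧
        {p : Fin P → ℝ | Φᵀ.mulVec p ∈ affineSpan ℝ (subdiff J x₀)}.Nonempty ∧
        (∃ A : AffineSubspace ℝ (Fin P → ℝ),
          (A : Set (Fin P → ℝ)) = {p | Φᵀ.mulVec p ∈ affineSpan ℝ (subdiff J x₀)}) ∧
        ∃ pF ∈ {p : Fin P → ℝ | Φᵀ.mulVec p ∈ affineSpan ℝ (subdiff J x₀)},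
          (∀ q ∈ {p : Fin P → ℝ | Φᵀ.mulVec p ∈ affineSpan ℝ (subdiff J x₀)},
            q ≠ pF → nrm2 pF < nrm2 q) ∧
          (∃ x : Fin N → ℝ, pF = Φ.mulVec (π x)) ∧ π (Φᵀ.mulVec pF) = e ∧
          ∀ p : Fin P → ℝ, (∃ x, p = Φ.mulVec (π x)) → π (Φᵀ.mulVec p) = e → p = pF := by
  obtain ⟨_, ⟨p₀, rfl⟩, hp₀⟩ := hD
  set A := affineSpan ℝ (subdiff J x₀)
  -- `Fin N → ℝ` carries the sup norm; orthogonal projections live on the Euclidean copy `AE`.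
  set AE := A.comap (WithLp.linearEquiv 2 ℝ (Fin N → ℝ)).toLinearMap.toAffineMap
  have hη₀ : toLp 2 (Φᵀ *ᵥ p₀) ∈ AE := subset_affineSpan ℝ _ hp₀
  set T := AE.directionᗮ
  have hT (u : Fin N → ℝ) : u ∈ modelT J x₀ ↔ toLp 2 u ∈ T := by
    rw [← forall_dotp_eq_zero_iff, AffineSubspace.direction_comap hη₀]
    rfl
  have hdir (v : Fin N → ℝ) : (∀ u ∈ modelT J x₀, dotp v u = 0) ↔ toLp 2 v ∈ AE.direction := by
    simp only [hT, forall_dotp_eq_zero_iff, T, Submodule.orthogonal_orthogonal]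
  set π := fun v : Fin N → ℝ => ofLp (T.starProjection (toLp 2 v))
  have hπ (z : Fin N → ℝ) : π z = π (Φᵀ *ᵥ p₀) ↔ z ∈ A :=
    (ofLp_injective (p := 2)).eq_iff.trans (AE.mem_iff_starProjection_eq hη₀).symm
  obtain ⟨pF, hpFA, hpFT, hmin, huniq⟩ := AE.exists_minNorm_comap (toEuclideanLin Φᵀ) hη₀
  rw [Matrix.adjoint_toEuclideanLin_transpose] at hpFT huniq
  have hrange (p : Fin P → ℝ) := exists_eq_mulVec_starProjection_iff Φ T p
  refine ⟨π, fun v => ⟨(hT _).2 (T.starProjection_apply_mem _), fun u hu => ?_⟩,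
    π (Φᵀ *ᵥ p₀), fun η hη => (hπ η).2 (subset_affineSpan ℝ _ hη), ?_, ⟨p₀, hη₀⟩,
    ⟨A.comap (mulVecLin Φᵀ).toAffineMap, rfl⟩, ofLp pF, hpFA, fun q hq hne => ?_,
    (hrange _).2 hpFT, (hπ _).2 hpFA,
    fun p hp hpe => congrArg ofLp (huniq (toLp 2 p) ((hrange p).1 hp) ((hπ _).1 hpe))⟩
  · rw [dotp_eq_inner]
    exact T.starProjection_inner_eq_zero _ _ ((hT u).1 hu)
  · ext z
    simp only [SetLike.mem_coe, Set.mem_ofPred_eq, hdir]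
    exact (AE.mem_iff_exists_eq_starProjection_add hη₀ (z := toLp 2 z)).trans
      ⟨fun ⟨w, hw, hz⟩ => ⟨ofLp w, hw, congrArg ofLp hz⟩,
        fun ⟨v, hv, hz⟩ => ⟨toLp 2 v, hv, congrArg (toLp 2) hz⟩⟩
  · rw [nrm2_eq_norm, nrm2_eq_norm]
    exact hmin (toLp 2 q) hq fun h => hne (congrArg ofLp h)

/-- (i) all elements of `∂J(x₀)` have the same orthogonal projection
`e_{x₀}` onto `T_{x₀}` (the projection `π` onto `T_{x₀}` being characterized by
membership and orthogonality of the residual), and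
`aff(∂J(x₀)) = e_{x₀} + T_{x₀}^⊥`; (ii) the set `{p : Φ^*p ∈ aff(∂J(x₀))}` is a
nonempty affine subspace whose unique minimal-Euclidean-norm element `p_F` is the
unique vector `p` in the range of `Φ ∘ proj_{T_{x₀}}` satisfying
`proj_{T_{x₀}}(Φ^*p) = e_{x₀}`. -/
theorem stmt8 {N P : ℕ} (J : (Fin N → ℝ) → ℝ) (hJ : ConvexOn ℝ Set.univ J)
    (Φ : Matrix (Fin P) (Fin N) ℝ) (x₀ : Fin N → ℝ)
    (hD : ({η : Fin N → ℝ | ∃ p : Fin P → ℝ, η = Φᵀ.mulVec p} ∩ subdiff J x₀).Nonempty)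
    (hker : {x : Fin N → ℝ | Φ.mulVec x = 0} ∩ modelT J x₀ = {0}) :
    ∃ π : (Fin N → ℝ) → (Fin N → ℝ),
      (∀ v, π v ∈ modelT J x₀ ∧ ∀ u ∈ modelT J x₀, dotp (v - π v) u = 0) ∧
      ∃ e : Fin N → ℝ,
        (∀ η ∈ subdiff J x₀, π η = e) ∧
        ((affineSpan ℝ (subdiff J x₀) : Set (Fin N → ℝ)) =
          {z | ∃ v, (∀ u ∈ modelT J x₀, dotp v u = 0) ∧ z = e + v}) ∧
        {p : Fin P → ℝ | Φᵀ.mulVec p ∈ affineSpan ℝ (subdiff J x₀)}.Nonempty ∧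
        (∃ A : AffineSubspace ℝ (Fin P → ℝ),
          (A : Set (Fin P → ℝ)) = {p | Φᵀ.mulVec p ∈ affineSpan ℝ (subdiff J x₀)}) ∧
        ∃ pF ∈ {p : Fin P → ℝ | Φᵀ.mulVec p ∈ affineSpan ℝ (subdiff J x₀)},
          (∀ q ∈ {p : Fin P → ℝ | Φᵀ.mulVec p ∈ affineSpan ℝ (subdiff J x₀)},
            q ≠ pF → nrm2 pF < nrm2 q) ∧
          (∃ x : Fin N → ℝ, pF = Φ.mulVec (π x)) ∧ π (Φᵀ.mulVec pF) = e ∧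
          ∀ p : Fin P → ℝ, (∃ x, p = Φ.mulVec (π x)) → π (Φᵀ.mulVec p) = e → p = pF :=
  stmt8_general J Φ x₀ hD
end

section
/- Let Φ : ℝ^N → ℝ^P be linear with columns φ₁,…,φ_N, let x₀ ∈ ℝ^N with I = supp(x₀), and assume (φ_i)_{i∈I} is linearly independent. Let η_F = Φ^* Φ_I (Φ_I^⊤Φ_I)^{-1} sign(x₀)_I be the linearized pre-certificate. Then η_F belongs to the relative interior of ∂‖·‖₁(x₀) if and only if the irrepresentable condition holds: ‖Φ_{I^c}^⊤ Φ_I (Φ_I^⊤Φ_I)^{-1} sign(x₀)_I‖_∞ < 1, where I^c is the complement of I and Φ_{I^c} the submatrix of columns indexed by I^c. -/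
/-! The affine hull of `∂‖·‖₁(x₀)` is `{η | η_I = sign(x₀)_I}` and its direction contains every
coordinate vector `e_j` with `j ∉ I`, so the relative interior of `∂‖·‖₁(x₀)` is
`{η | η_I = sign(x₀)_I, |η_j| < 1 for j ∉ I}`. Linear independence of `(φ_i)_{i ∈ I}` makes the
Gram matrix `Φ_Iᵀ Φ_I` invertible, hence `(η_F)_I = Φ_Iᵀ Φ_I (Φ_Iᵀ Φ_I)⁻¹ sign(x₀)_I = sign(x₀)_I`,
and the remaining condition on `I^c` is exactly the irrepresentable condition. -/

open Matrix

/-- Support of `x` as a finite set of indices. -/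
noncomputable def suppF {n : ℕ} (x : Fin n → ℝ) : Finset (Fin n) :=
  Finset.univ.filter fun i => x i ≠ 0

/-- The submatrix `Φ_I` of columns of `Φ` indexed by `I`. -/
noncomputable def colsub {N P : ℕ} (Φ : Matrix (Fin P) (Fin N) ℝ) (I : Finset (Fin N)) :
    Matrix (Fin P) ↥I ℝ := Φ.submatrix id (↑)

/-- The vector `p_F = Φ_I (Φ_I^⊤ Φ_I)⁻¹ s` for a sign vector `s` on `I`. -/
noncomputable def pFvec {N P : ℕ} (Φ : Matrix (Fin P) (Fin N) ℝ) (I : Finset (Fin N))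
    (s : ↥I → ℝ) : Fin P → ℝ :=
  (colsub Φ I).mulVec ((((colsub Φ I)ᵀ * (colsub Φ I))⁻¹).mulVec s)

/-- The irrepresentable-condition quantity `‖Φ_{I^c}^⊤ Φ_I (Φ_I^⊤Φ_I)⁻¹ s‖_∞`. -/
noncomputable def ICval {N P : ℕ} (Φ : Matrix (Fin P) (Fin N) ℝ) (I : Finset (Fin N))
    (s : ↥I → ℝ) : ℝ :=
  linf ((Φ.submatrix id ((↑) : {j // j ∉ I} → Fin N))ᵀ.mulVec (pFvec Φ I s))

/-- The subdifferential of the ℓ¹ norm at `x`: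
`{η : ‖η‖_∞ ≤ 1 and η_i = sign(x_i) on supp(x)}`. -/
noncomputable def l1subdiff {n : ℕ} (x : Fin n → ℝ) : Set (Fin n → ℝ) :=
  {η | linf η ≤ 1 ∧ ∀ i, x i ≠ 0 → η i = sgn (x i)}

lemma abs_sgn_le_one (t : ℝ) : |sgn t| ≤ 1 := by
  unfold sgn; split_ifs <;> simp

section linf

variable {ι : Type*} [Fintype ι] {u : ι → ℝ} {c : ℝ}

lemma linf_le_iff (hc : 0 ≤ c) : linf u ≤ c ↔ ∀ i, |u i| ≤ c :=
  ⟨fun h i => (le_ciSup (Set.finite_range _).bddAbove i).trans h,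
    fun h => Real.iSup_le h hc⟩

lemma linf_lt_iff (hc : 0 < c) : linf u < c ↔ ∀ i, |u i| < c := by
  rcases isEmpty_or_nonempty ι with hι | hι
  · simp [linf, Real.iSup_of_isEmpty, hc]
  · refine ⟨fun h i => (le_ciSup (Set.finite_range _).bddAbove i).trans_lt h, fun h => ?_⟩
    obtain ⟨i, hi⟩ := Finite.exists_max fun i => |u i|
    exact (ciSup_le hi).trans_lt (h i)

end linf

lemma apply_eq_of_mem_affineSpan {ι : Type*} {s : Set (ι → ℝ)} {i : ι} {c : ℝ}
    (h : ∀ z ∈ s, z i = c) {z : ι → ℝ} (hz : z ∈ affineSpan ℝ s) : z i = c := by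
  have : affineSpan ℝ s ≤
      (affineSpan ℝ {c}).comap (LinearMap.proj i : (ι → ℝ) →ₗ[ℝ] ℝ).toAffineMap :=
    affineSpan_le.2 fun z hz => by simp [h z hz]
  simpa using this hz

lemma transpose_mulVec_mulVec_inv_gram {m n : Type*} [Fintype m] [Fintype n] [DecidableEq n]
    {B : Matrix m n ℝ} (hB : Function.Injective B.mulVec) (s : n → ℝ) :
    Bᵀ *ᵥ (B *ᵥ ((Bᵀ * B)⁻¹ *ᵥ s)) = s := by
  have hG : (Bᵀ * B).PosDef := by
    simpa only [conjTranspose_eq_transpose_of_trivial] using PosDef.conjTranspose_mul_self B hB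
  rw [mulVec_mulVec, mulVec_mulVec,
    mul_nonsing_inv _ ((isUnit_iff_isUnit_det _).1 hG.isUnit), one_mulVec]

lemma mem_suppF {n : ℕ} {x : Fin n → ℝ} {i : Fin n} : i ∈ suppF x ↔ x i ≠ 0 := by
  simp [suppF]

section l1subdiff

open Topology

variable {n : ℕ} {x η : Fin n → ℝ}

lemma mem_l1subdiff_iff :
    η ∈ l1subdiff x ↔ (∀ i, x i ≠ 0 → η i = sgn (x i)) ∧ ∀ i, x i = 0 → |η i| ≤ 1 := by
  refine ⟨fun h => ⟨h.2, fun i _ => (linf_le_iff zero_le_one).1 h.1 i⟩, fun h => ⟨?_, h.1⟩⟩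
  refine (linf_le_iff zero_le_one).2 fun i => ?_
  by_cases hi : x i = 0
  · exact h.2 i hi
  · rw [h.1 i hi]
    exact abs_sgn_le_one _

lemma sgn_mem_l1subdiff (x : Fin n → ℝ) : (fun i => sgn (x i)) ∈ l1subdiff x :=
  mem_l1subdiff_iff.2 ⟨fun _ _ => rfl, fun _ _ => abs_sgn_le_one _⟩

lemma single_mem_direction_affineSpan_l1subdiff {j : Fin n} (hj : x j = 0) :
    Pi.single j 1 ∈ (affineSpan ℝ (l1subdiff x)).direction := by
  have hmem : (fun i => sgn (x i)) + Pi.single j 1 ∈ l1subdiff x := by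
    refine mem_l1subdiff_iff.2 ⟨fun i hi => ?_, fun i hi => ?_⟩
    · simp [Pi.single_eq_of_ne (ne_of_apply_ne x (hj ▸ hi))]
    · rcases eq_or_ne i j with rfl | hij
      · simp [hj, sgn]
      · simpa [Pi.single_eq_of_ne hij] using abs_sgn_le_one (x i)
  simpa using AffineSubspace.vsub_mem_direction (subset_affineSpan ℝ _ hmem)
    (subset_affineSpan ℝ _ (sgn_mem_l1subdiff x))

theorem mem_intrinsicInterior_l1subdiff_iff :
    η ∈ intrinsicInterior ℝ (l1subdiff x) ↔
      (∀ i, x i ≠ 0 → η i = sgn (x i)) ∧ ∀ i, x i = 0 → |η i| < 1 := by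
  constructor
  · intro h
    refine ⟨(mem_l1subdiff_iff.1 (intrinsicInterior_subset h)).1, fun j hj => ?_⟩
    obtain ⟨a, ha, rfl⟩ := mem_intrinsicInterior.1 h
    -- the line through `a` along `e_j`, parametrised so that coordinate `j` of `path t` is `t`
    let path : ℝ → affineSpan ℝ (l1subdiff x) := fun t =>
      ⟨(t - a.1 j) • Pi.single j 1 +ᵥ a.1, AffineSubspace.vadd_mem_of_mem_direction
        (Submodule.smul_mem _ _ (single_mem_direction_affineSpan_l1subdiff hj)) a.2⟩
    have hpath : Continuous path := by fun_prop
    have hstart : path (a.1 j) = a := by ext1; simp [path]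
    have hnhds : path ⁻¹' ((↑) ⁻¹' l1subdiff x) ∈ 𝓝 (a.1 j) :=
      hpath.continuousAt.preimage_mem_nhds <| by
        rw [hstart]; exact mem_interior_iff_mem_nhds.1 ha
    have hIcc : Set.Icc (-1) 1 ∈ 𝓝 (a.1 j) := Filter.mem_of_superset hnhds fun t ht => by
      simpa [path, abs_le] using (mem_l1subdiff_iff.1 ht).2 j hj
    simpa [abs_lt, interior_Icc] using mem_interior_iff_mem_nhds.2 hIcc
  · rintro ⟨hsupp, hoff⟩
    have hηC : η ∈ l1subdiff x := mem_l1subdiff_iff.2 ⟨hsupp, fun i hi => (hoff i hi).le⟩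
    refine mem_intrinsicInterior.2
      ⟨⟨η, subset_affineSpan ℝ _ hηC⟩, mem_interior_iff_mem_nhds.2 ?_, rfl⟩
    have hoff_nhds : ∀ᶠ z in 𝓝 η, ∀ i, x i = 0 → |z i| < 1 :=
      Filter.eventually_all.2 fun i => Filter.eventually_imp_distrib_left.2 fun hi =>
        (continuous_apply i).abs.continuousAt.eventually_lt continuousAt_const (hoff i hi)
    filter_upwards [continuous_subtype_val.continuousAt.preimage_mem_nhds hoff_nhds] with z hz
    refine mem_l1subdiff_iff.2 ⟨fun i hi => ?_, fun i hi => (hz i hi).le⟩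
    exact apply_eq_of_mem_affineSpan (fun w hw => (mem_l1subdiff_iff.1 hw).1 i hi) z.2

end l1subdiff

section precertificate

variable {N P : ℕ} {Φ : Matrix (Fin P) (Fin N) ℝ} {I : Finset (Fin N)}

lemma transpose_mulVec_pFvec_apply_of_mem
    (hli : LinearIndependent ℝ (fun i : I => Φᵀ (i : Fin N))) (s : I → ℝ) (i : I) :
    (Φᵀ *ᵥ pFvec Φ I s) i = s i :=
  congrFun (transpose_mulVec_mulVec_inv_gram (mulVec_injective_iff.2 hli) s) i

lemma ICval_eq_linf (s : I → ℝ) :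
    ICval Φ I s = linf fun j : {j // j ∉ I} => (Φᵀ *ᵥ pFvec Φ I s) j :=
  rfl

end precertificate

/-- the linearized pre-certificate
`η_F = Φ^* Φ_I (Φ_I^⊤Φ_I)⁻¹ sign(x₀)_I` lies in the relative interior of
`∂‖·‖₁(x₀)` iff the irrepresentable condition
`‖Φ_{I^c}^⊤ Φ_I (Φ_I^⊤Φ_I)⁻¹ sign(x₀)_I‖_∞ < 1` holds. -/
theorem stmt10 {N P : ℕ} (Φ : Matrix (Fin P) (Fin N) ℝ) (x₀ : Fin N → ℝ)
    (hli : LinearIndependent ℝ (fun i : ↥(suppF x₀) => Φᵀ (i : Fin N))) :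
    Φᵀ.mulVec (pFvec Φ (suppF x₀) (fun i => sgn (x₀ i))) ∈
        intrinsicInterior ℝ (l1subdiff x₀) ↔
      ICval Φ (suppF x₀) (fun i => sgn (x₀ i)) < 1 := by
  rw [mem_intrinsicInterior_l1subdiff_iff, ICval_eq_linf, linf_lt_iff one_pos]
  refine ⟨fun h j => h.2 j (by simpa [mem_suppF] using j.2),
    fun h => ⟨fun i hi => ?_, fun i hi => ?_⟩⟩
  · exact transpose_mulVec_pFvec_apply_of_mem hli _ ⟨i, mem_suppF.2 hi⟩
  · exact h ⟨i, by simpa [mem_suppF]⟩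
end

section
/- (Local sensitivity of Lasso solutions.) Let λ > 0, y ∈ ℝ^P, and let x⋆ be a minimizer of x ↦ (1/(2λ))‖Φx − y‖² + ‖x‖₁ with I = supp(x⋆). Assume (φ_j)_{j∈I} is linearly independent and that |⟨φ_j, y − Φx⋆⟩| < λ for every j ∉ I. Then there exist an open neighborhood V of y and a continuously differentiable (indeed affine) map x̃ : V → ℝ^N such that x̃(y) = x⋆, for every ȳ ∈ V the vector x̃(ȳ) is a minimizer of x ↦ (1/(2λ))‖Φx − ȳ‖² + ‖x‖₁ with supp(x̃(ȳ)) ⊆ I, and x̃(ȳ) = x⋆ + E_I (Φ_I^⊤Φ_I)^{-1} Φ_I^⊤ (ȳ − y), where E_I : ℝ^{|I|} → ℝ^N is the natural embedding placing coordinates on the index set I and zeros elsewhere. -/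
/-!
Near `x⋆` the Lasso is a least-squares problem on the support `I` with the sign pattern of `x⋆`.
The first-order conditions `Φ_Iᵀ (y - Φ x⋆) = λ sgn x⋆` and `|⟨φ_j, y - Φ x⋆⟩| ≤ λ` off `I` are
also sufficient for optimality, by convexity. The affine refit
`x̃(ȳ) = x⋆ + E_I (Φ_IᵀΦ_I)⁻¹ Φ_Iᵀ (ȳ - y)` leaves the correlations `Φ_Iᵀ (ȳ - Φ x̃(ȳ))` unchanged,
and, by continuity, keeps the signs of `x⋆` on `I` and the strict inequalities off `I` for `ȳ`
near `y`; hence `x̃(ȳ)` satisfies the optimality conditions at `ȳ`.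
-/

open Matrix

/-- The natural embedding `E_I : ℝ^{|I|} → ℝ^N` placing coordinates on `I` and
zeros elsewhere. -/
noncomputable def embedI {n : ℕ} (I : Finset (Fin n)) (v : ↥I → ℝ) : Fin n → ℝ :=
  fun i => if h : i ∈ I then v ⟨i, h⟩ else 0

open Filter Topology

noncomputable def lassoObj {N P : ℕ} (Φ : Matrix (Fin P) (Fin N) ℝ) (lam : ℝ)
    (y : Fin P → ℝ) (x : Fin N → ℝ) : ℝ :=
  1 / (2 * lam) * nrm2 (Φ *ᵥ x - y) ^ 2 + l1norm x

lemma sgn_mul_eq_abs {c z : ℝ} (h : 0 < c * z) : sgn c * z = |z| := by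
  rcases lt_trichotomy c 0 with hc | rfl | hc
  · have hz : z < 0 := by nlinarith
    simp [sgn, hc, hc.not_gt, abs_of_neg hz]
  · simp at h
  · have hz : 0 < z := by nlinarith
    simp [sgn, hc, abs_of_pos hz]

lemma abs_sgn {c : ℝ} (hc : c ≠ 0) : |sgn c| = 1 := by
  rcases hc.lt_or_gt with hc | hc <;> simp [sgn, hc, hc.not_gt]

lemma sq_nrm2 {n : ℕ} (u : Fin n → ℝ) : nrm2 u ^ 2 = u ⬝ᵥ u := by
  rw [nrm2, Real.sq_sqrt (Finset.sum_nonneg fun i _ => sq_nonneg (u i))]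
  simp only [dotProduct, sq]

lemma sq_nrm2_mulVec_add_sub {N P : ℕ} (Φ : Matrix (Fin P) (Fin N) ℝ) (y : Fin P → ℝ)
    (x δ : Fin N → ℝ) :
    nrm2 (Φ *ᵥ (x + δ) - y) ^ 2 =
      nrm2 (Φ *ᵥ x - y) ^ 2 - 2 * (Φᵀ *ᵥ (y - Φ *ᵥ x)) ⬝ᵥ δ + (Φ *ᵥ δ) ⬝ᵥ (Φ *ᵥ δ) := by
  rw [sq_nrm2, sq_nrm2, mulVec_transpose, ← dotProduct_mulVec, mulVec_add]
  simp only [add_sub_right_comm, add_dotProduct, dotProduct_add, sub_dotProduct,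
    dotProduct_sub, dotProduct_comm (Φ *ᵥ δ)]
  ring

lemma l1norm_add_single {n : ℕ} (x : Fin n → ℝ) (j : Fin n) (t : ℝ) :
    l1norm (x + Pi.single j t) = l1norm x + (|x j + t| - |x j|) := by
  rw [l1norm, l1norm, ← sub_eq_iff_eq_add', ← Finset.sum_sub_distrib,
    Finset.sum_eq_single j (fun i _ hi => by simp [hi]) (by simp)]
  simp

lemma lassoObj_le_of_kkt {N P : ℕ} (Φ : Matrix (Fin P) (Fin N) ℝ) {lam : ℝ}
    (hlam : 0 < lam) (y : Fin P → ℝ) (x : Fin N → ℝ)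
    (hbound : ∀ j, |(Φᵀ *ᵥ (y - Φ *ᵥ x)) j| ≤ lam)
    (hsupp : ∀ j, (Φᵀ *ᵥ (y - Φ *ᵥ x)) j * x j = lam * |x j|) (x' : Fin N → ℝ) :
    lassoObj Φ lam y x ≤ lassoObj Φ lam y x' := by
  set c := Φᵀ *ᵥ (y - Φ *ᵥ x)
  have hcorr : c ⬝ᵥ (x' - x) ≤ lam * (l1norm x' - l1norm x) := by
    rw [l1norm, l1norm, ← Finset.sum_sub_distrib, Finset.mul_sum]
    refine Finset.sum_le_sum fun j _ => ?_
    have : c j * x' j ≤ lam * |x' j| := calc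
      c j * x' j ≤ |c j| * |x' j| := by rw [← abs_mul]; exact le_abs_self _
      _ ≤ lam * |x' j| := mul_le_mul_of_nonneg_right (hbound j) (abs_nonneg _)
    simp only [Pi.sub_apply]
    linarith [hsupp j]
  have hquad : 0 ≤ (Φ *ᵥ (x' - x)) ⬝ᵥ (Φ *ᵥ (x' - x)) := by
    rw [← sq_nrm2]; positivity
  have hexp := sq_nrm2_mulVec_add_sub Φ y x (x' - x)
  rw [add_sub_cancel] at hexp
  rw [lassoObj, lassoObj, hexp, ← sub_nonneg]
  have hdiff : 1 / (2 * lam) * (nrm2 (Φ *ᵥ x - y) ^ 2 - 2 * c ⬝ᵥ (x' - x) +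
      (Φ *ᵥ (x' - x)) ⬝ᵥ (Φ *ᵥ (x' - x))) + l1norm x' -
      (1 / (2 * lam) * nrm2 (Φ *ᵥ x - y) ^ 2 + l1norm x) =
      ((Φ *ᵥ (x' - x)) ⬝ᵥ (Φ *ᵥ (x' - x)) +
        2 * (lam * (l1norm x' - l1norm x) - c ⬝ᵥ (x' - x))) / (2 * lam) := by
    field_simp
    ring
  rw [hdiff]
  exact div_nonneg (by linarith) (by linarith)

lemma kkt_of_isMin_lassoObj {N P : ℕ} (Φ : Matrix (Fin P) (Fin N) ℝ) {lam : ℝ}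
    (hlam : lam ≠ 0) (y : Fin P → ℝ) (x : Fin N → ℝ)
    (hmin : ∀ x', lassoObj Φ lam y x ≤ lassoObj Φ lam y x') {j : Fin N} (hj : x j ≠ 0) :
    (Φᵀ *ᵥ (y - Φ *ᵥ x)) j = lam * sgn (x j) := by
  set c := (Φᵀ *ᵥ (y - Φ *ᵥ x)) j
  set q := (Φ *ᵥ Pi.single j 1) ⬝ᵥ (Φ *ᵥ Pi.single j 1)
  -- near `t = 0` the objective along the `j`-th axis is this quadratic polynomial
  set p : ℝ → ℝ := fun t =>
    lassoObj Φ lam y x + t * (sgn (x j) - c / lam) + t ^ 2 * (q / (2 * lam))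
  have hsign : ∀ᶠ t in 𝓝 0, 0 < x j * (x j + t) :=
    continuousAt_const.eventually_lt (by fun_prop) (by simpa using mul_self_pos.2 hj)
  have hp : (fun t => lassoObj Φ lam y (x + Pi.single j t)) =ᶠ[𝓝 0] p := by
    filter_upwards [hsign] with t ht
    have hsingle : Pi.single j t = t • (Pi.single j 1 : Fin N → ℝ) := by
      rw [← Pi.single_smul', smul_eq_mul, mul_one]
    have habs : |x j + t| - |x j| = sgn (x j) * t := by
      rw [← sgn_mul_eq_abs ht, ← sgn_mul_eq_abs (mul_self_pos.2 hj)]; ring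
    simp only [p, lassoObj, sq_nrm2_mulVec_add_sub, l1norm_add_single, habs]
    rw [hsingle, mulVec_smul, dotProduct_smul, smul_dotProduct, dotProduct_smul]
    simp only [smul_eq_mul, dotProduct_single, mul_one]
    field_simp
    ring
  have hloc : IsLocalMin p 0 := by
    filter_upwards [hp] with t ht
    have hp0 : p 0 = lassoObj Φ lam y x := by simp only [p]; ring
    rw [← ht, hp0]
    exact hmin _
  have hderiv : HasDerivAt p (sgn (x j) - c / lam) 0 := by
    have := ((hasDerivAt_mul_const (sgn (x j) - c / lam)).const_add
      (lassoObj Φ lam y x)).fun_add ((hasDerivAt_pow 2 (0 : ℝ)).mul_const (q / (2 * lam)))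
    simpa using this
  have := hloc.hasDerivAt_eq_zero hderiv
  field_simp at this
  linarith

lemma isUnit_transpose_mul_self {m n K : Type*} [Fintype m] [Fintype n] [DecidableEq n]
    [Field K] [LinearOrder K] [IsStrictOrderedRing K] {A : Matrix m n K}
    (hA : LinearIndependent K A.col) : IsUnit (Aᵀ * A) := by
  rw [← mulVec_injective_iff_isUnit, ← coe_mulVecLin, ← LinearMap.ker_eq_bot,
    ker_mulVecLin_transpose_mul_self, LinearMap.ker_eq_bot, coe_mulVecLin, mulVec_injective_iff]
  exact hA

lemma contDiff_mulVec {m n : Type*} [Fintype m] [Fintype n] (M : Matrix m n ℝ)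
    {k : WithTop ℕ∞} : ContDiff ℝ k (M *ᵥ ·) :=
  (LinearMap.toContinuousLinearMap M.mulVecLin).contDiff

lemma embedI_eq_mulVec {n : ℕ} (I : Finset (Fin n)) (v : ↥I → ℝ) :
    embedI I v = colsub 1 I *ᵥ v := by
  ext i
  by_cases hi : i ∈ I
  · rw [mulVec, dotProduct, Finset.sum_eq_single ⟨i, hi⟩ (fun k _ hk => ?_) (by simp)]
    · simp [embedI, hi, colsub, one_apply]
    · simp only [colsub, submatrix_apply, id, one_apply, ite_mul, one_mul, zero_mul]
      exact if_neg fun h => hk (Subtype.ext h.symm)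
  · simp only [embedI, hi, mulVec, dotProduct, colsub, submatrix_apply, id, one_apply, ite_mul,
      one_mul, zero_mul, dite_false]
    exact (Finset.sum_eq_zero fun (k : ↥I) _ => if_neg fun h : i = k => hi (h ▸ k.2)).symm

lemma mulVec_embedI {N P : ℕ} (Φ : Matrix (Fin P) (Fin N) ℝ) (I : Finset (Fin N))
    (v : ↥I → ℝ) : Φ *ᵥ embedI I v = colsub Φ I *ᵥ v := by
  rw [embedI_eq_mulVec, mulVec_mulVec, colsub, colsub]
  simpa using congrArg (· *ᵥ v) (mul_submatrix_one (Equiv.refl (Fin N)) (↑) Φ)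

noncomputable def lassoAffineMap {N P : ℕ} (Φ : Matrix (Fin P) (Fin N) ℝ) (I : Finset (Fin N))
    (y : Fin P → ℝ) (x : Fin N → ℝ) (ybar : Fin P → ℝ) : Fin N → ℝ :=
  x + embedI I (((colsub Φ I)ᵀ * colsub Φ I)⁻¹ *ᵥ ((colsub Φ I)ᵀ *ᵥ (ybar - y)))

section lassoAffineMap

variable {N P : ℕ} (Φ : Matrix (Fin P) (Fin N) ℝ) (I : Finset (Fin N)) (y : Fin P → ℝ)
  (x : Fin N → ℝ)

lemma contDiff_lassoAffineMap {k : WithTop ℕ∞} : ContDiff ℝ k (lassoAffineMap Φ I y x) := by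
  have : lassoAffineMap Φ I y x = fun ybar =>
      x + (colsub 1 I * ((colsub Φ I)ᵀ * colsub Φ I)⁻¹ * (colsub Φ I)ᵀ) *ᵥ (ybar - y) := by
    ext1 ybar
    rw [lassoAffineMap, embedI_eq_mulVec, mulVec_mulVec, mulVec_mulVec, Matrix.mul_assoc]
  rw [this]
  exact contDiff_const.add ((contDiff_mulVec _).comp (contDiff_id.sub contDiff_const))

lemma lassoAffineMap_self : lassoAffineMap Φ I y x y = x := by
  ext i
  simp [lassoAffineMap, embedI]

lemma lassoAffineMap_apply_of_notMem (ybar : Fin P → ℝ) {i : Fin N} (hi : i ∉ I) :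
    lassoAffineMap Φ I y x ybar i = x i := by
  simp [lassoAffineMap, embedI, hi]

lemma transpose_colsub_mulVec_sub_lassoAffineMap (hG : IsUnit ((colsub Φ I)ᵀ * colsub Φ I).det)
    (ybar : Fin P → ℝ) :
    (colsub Φ I)ᵀ *ᵥ (ybar - Φ *ᵥ lassoAffineMap Φ I y x ybar) =
      (colsub Φ I)ᵀ *ᵥ (y - Φ *ᵥ x) := by
  set A := colsub Φ I
  have hAAinv : Aᵀ *ᵥ (A *ᵥ ((Aᵀ * A)⁻¹ *ᵥ (Aᵀ *ᵥ (ybar - y)))) = Aᵀ *ᵥ (ybar - y) := by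
    rw [mulVec_mulVec, mulVec_mulVec, mul_nonsing_inv _ hG, one_mulVec]
  rw [lassoAffineMap, mulVec_add, mulVec_embedI, ← sub_sub, mulVec_sub, hAAinv, mulVec_sub,
    mulVec_sub, mulVec_sub]
  abel

end lassoAffineMap

lemma eventually_lassoAffineMap_isMinimizer {N P : ℕ} (Φ : Matrix (Fin P) (Fin N) ℝ)
    {lam : ℝ} (hlam : 0 < lam) (y : Fin P → ℝ) (xs : Fin N → ℝ)
    (hmin : ∀ x, lassoObj Φ lam y xs ≤ lassoObj Φ lam y x)
    (hli : LinearIndependent ℝ (fun i : ↥(suppF xs) => Φᵀ (i : Fin N)))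
    (hstrict : ∀ j, xs j = 0 → |(Φᵀ *ᵥ (y - Φ *ᵥ xs)) j| < lam) :
    ∀ᶠ ybar in 𝓝 y, ∀ x, lassoObj Φ lam ybar (lassoAffineMap Φ (suppF xs) y xs ybar) ≤
      lassoObj Φ lam ybar x := by
  set xt := lassoAffineMap Φ (suppF xs) y xs
  have hxt : Continuous xt := (contDiff_lassoAffineMap (k := 0) ..).continuous
  have hG := (isUnit_iff_isUnit_det _).1
    (isUnit_transpose_mul_self (A := colsub Φ (suppF xs)) hli)
  have hsupp (ybar : Fin P → ℝ) {j : Fin N} (hj : xs j ≠ 0) :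
      (Φᵀ *ᵥ (ybar - Φ *ᵥ xt ybar)) j = lam * sgn (xs j) := by
    rw [← kkt_of_isMin_lassoObj Φ hlam.ne' y xs hmin hj]
    exact congrFun (transpose_colsub_mulVec_sub_lassoAffineMap Φ _ y xs hG ybar)
      ⟨j, by simpa [suppF] using hj⟩
  have hsign : ∀ᶠ ybar in 𝓝 y, ∀ j, xs j ≠ 0 → 0 < xs j * xt ybar j :=
    eventually_all.2 fun j => eventually_imp_distrib_left.2 fun hj =>
      continuousAt_const.eventually_lt (by fun_prop)
        (by simpa [xt, lassoAffineMap_self] using mul_self_pos.2 hj)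
  have hoff : ∀ᶠ ybar in 𝓝 y, ∀ j, xs j = 0 → |(Φᵀ *ᵥ (ybar - Φ *ᵥ xt ybar)) j| < lam :=
    eventually_all.2 fun j => eventually_imp_distrib_left.2 fun hj =>
      ContinuousAt.eventually_lt (by fun_prop) continuousAt_const
        (by simpa [xt, lassoAffineMap_self] using hstrict j hj)
  filter_upwards [hsign, hoff] with ybar hsign hoff
  refine lassoObj_le_of_kkt Φ hlam ybar (xt ybar) (fun j => ?_) (fun j => ?_)
  · by_cases hj : xs j = 0
    · exact (hoff j hj).le
    · rw [hsupp ybar hj, abs_mul, abs_of_pos hlam, abs_sgn hj, mul_one]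
  · by_cases hj : xs j = 0
    · simp [xt, lassoAffineMap_apply_of_notMem, suppF, hj]
    · rw [hsupp ybar hj, mul_assoc, sgn_mul_eq_abs (hsign j hj)]

/-- local sensitivity of Lasso solutions. Under injectivity of
`Φ_I` (`I = supp(x⋆)`) and strict dual feasibility off the support, there is an
open neighborhood `V` of `y` and a `C¹` (affine) map `x̃` on `V` with `x̃(y)=x⋆`,
`x̃(ȳ)` a Lasso minimizer at `ȳ` with support in `I`, and
`x̃(ȳ) = x⋆ + E_I (Φ_I^⊤Φ_I)⁻¹ Φ_I^⊤ (ȳ − y)`. -/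
theorem stmt14 {N P : ℕ} (Φ : Matrix (Fin P) (Fin N) ℝ) (lam : ℝ) (hlam : 0 < lam)
    (y : Fin P → ℝ) (xs : Fin N → ℝ)
    (hmin : ∀ x, (1 / (2 * lam)) * nrm2 (Φ.mulVec xs - y) ^ 2 + l1norm xs ≤
                 (1 / (2 * lam)) * nrm2 (Φ.mulVec x - y) ^ 2 + l1norm x)
    (hli : LinearIndependent ℝ (fun i : ↥(suppF xs) => Φᵀ (i : Fin N)))
    (hstrict : ∀ j, xs j = 0 → |dotp (Φᵀ j) (y - Φ.mulVec xs)| < lam) :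
    ∃ V : Set (Fin P → ℝ), IsOpen V ∧ y ∈ V ∧
      ∃ xt : (Fin P → ℝ) → (Fin N → ℝ), ContDiffOn ℝ 1 xt V ∧ xt y = xs ∧
        ∀ ybar ∈ V,
          (∀ x, (1 / (2 * lam)) * nrm2 (Φ.mulVec (xt ybar) - ybar) ^ 2 + l1norm (xt ybar) ≤
                (1 / (2 * lam)) * nrm2 (Φ.mulVec x - ybar) ^ 2 + l1norm x) ∧
          (∀ i, xt ybar i ≠ 0 → xs i ≠ 0) ∧
          xt ybar = xs + embedI (suppF xs)
            ((((colsub Φ (suppF xs))ᵀ * (colsub Φ (suppF xs)))⁻¹).mulVec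
              ((colsub Φ (suppF xs))ᵀ.mulVec (ybar - y))) := by
  obtain ⟨V, hVmin, hVopen, hyV⟩ :=
    eventually_nhds_iff.1 (eventually_lassoAffineMap_isMinimizer Φ hlam y xs hmin hli hstrict)
  refine ⟨V, hVopen, hyV, lassoAffineMap Φ (suppF xs) y xs,
    (contDiff_lassoAffineMap ..).contDiffOn, lassoAffineMap_self ..,
    fun ybar hybar => ⟨hVmin ybar hybar, ?_, rfl⟩⟩
  intro i hi hxs
  rw [lassoAffineMap_apply_of_notMem _ _ _ _ _ (by simpa [suppF] using hxs)] at hi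
  exact hi hxs
end
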